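/- arXiv:1401.1571 — 5 statements merged into one kernel-verified Lean document; each statement's English description precedes it below -/
import Mathlib

section
/- Let R be a commutative ring, I, J ideals of R and a, b ∈ I. If I^2 = J·I + (a·b), then for every n ≥ 1 one has I^{n+1} = J·I^n + (a^n·b). -/
theorem stmt_2 {R : Type*} [CommRing R] (I J : Ideal R) (a b : R)
    (ha : a ∈ I) (hb : b ∈ I)
    (h : I ^ 2 = J * I ⊔ Ideal.span {a * b}) :
    ∀ n : ℕ, 1 ≤ n → I ^ (n + 1) = J * I ^ n ⊔ Ideal.span {a ^ n * b} := by
  intro n hn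
  induction n, hn using Nat.le_induction with
  | base => simpa [pow_one] using h
  | succ n hn ih =>
    apply le_antisymm
    · have hpow : I ^ (n + 1 + 1) = I ^ (n + 1) * I := pow_succ I (n + 1)
      conv_lhs => rw [hpow, ih, Ideal.sup_mul]
      apply sup_le
      · have : J * I ^ n * I = J * I ^ (n + 1) := by rw [mul_assoc, ← pow_succ]
        rw [this]; exact le_sup_left
      · have h1 : Ideal.span {a ^ n * b} * I = Ideal.span {a ^ n} * (Ideal.span {b} * I) := by
          rw [← mul_assoc, Ideal.span_singleton_mul_span_singleton]
        rw [h1]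
        have h2 : Ideal.span {b} * I ≤ J * I ⊔ Ideal.span {a * b} := by
          rw [← h, pow_two]
          exact Ideal.mul_mono_left (Ideal.span_le.mpr (by simpa using hb))
        calc Ideal.span {a ^ n} * (Ideal.span {b} * I)
            ≤ Ideal.span {a ^ n} * (J * I ⊔ Ideal.span {a * b}) :=
              Ideal.mul_mono_right h2
          _ = Ideal.span {a ^ n} * (J * I) ⊔ Ideal.span {a ^ n} * Ideal.span {a * b} :=
              Ideal.mul_sup _ _ _
          _ ≤ J * I ^ (n + 1) ⊔ Ideal.span {a ^ (n + 1) * b} := by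
              apply sup_le_sup
              · have : Ideal.span {a ^ n} * (J * I) = J * (Ideal.span {a ^ n} * I) := by ring
                rw [this]
                refine Ideal.mul_mono_right ?_
                calc Ideal.span {a ^ n} * I ≤ I ^ n * I :=
                      Ideal.mul_mono_left (Ideal.span_le.mpr (by
                        simpa using Ideal.pow_mem_pow ha n))
                  _ = I ^ (n + 1) := (pow_succ I n).symm
              · rw [Ideal.span_singleton_mul_span_singleton]
                apply Ideal.span_mono
                intro x hx
                simp only [Set.mem_singleton_iff] at hx ⊢
                rw [hx]; ring
    · apply sup_le
      · have hJI : J * I ≤ I ^ 2 := by rw [h]; exact le_sup_left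
        calc J * I ^ (n + 1) = (J * I) * I ^ n := by ring
          _ ≤ I ^ 2 * I ^ n := Ideal.mul_mono_left hJI
          _ = I ^ (n + 1 + 1) := by ring
      · rw [Ideal.span_le]
        intro x hx
        simp only [Set.mem_singleton_iff] at hx
        subst hx
        have : a ^ (n + 1) * b ∈ I ^ (n + 1) * I :=
          Ideal.mul_mem_mul (Ideal.pow_mem_pow ha (n + 1)) hb
        rwa [← pow_succ] at this
end

section
/- Let R be a commutative ring, I, J ideals of R and a, b ∈ I with a·I ⊆ J·I + (a·b). Then I = (b) + ((J·I : a) ∩ I), and consequently I = (b) + ((J : a) ∩ I). -/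
namespace Ideal

variable {R : Type*} [CommRing R] {I K : Ideal R} {a b : R}

/-- Writing `a * x = k + r * (a * b)` with `k ∈ K`, the element `x - r * b` lies in `(K : a) ∩ I`. -/
theorem mem_span_singleton_sup_colon_inf {x : R} (hb : b ∈ I) (hx : x ∈ I)
    (hax : a * x ∈ K ⊔ span {a * b}) :
    x ∈ span {b} ⊔ (K.colon (span {a}) ⊓ I) := by
  obtain ⟨k, hk, _, hr, hsum⟩ := Submodule.mem_sup.mp hax
  obtain ⟨r, rfl⟩ := mem_span_singleton'.mp hr
  have hcolon : x - r * b ∈ K.colon (span {a}) := by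
    rw [mem_colon_span_singleton]
    convert hk using 1
    linear_combination -hsum
  have hrb : r * b ∈ span {b} := mem_span_singleton'.mpr ⟨r, rfl⟩
  simpa using Submodule.add_mem_sup hrb
    (Submodule.mem_inf.mpr ⟨hcolon, I.sub_mem hx (I.mul_mem_left r hb)⟩)

theorem eq_span_singleton_sup_colon_inf (hb : b ∈ I)
    (h : ∀ x ∈ I, a * x ∈ K ⊔ span {a * b}) :
    I = span {b} ⊔ (K.colon (span {a}) ⊓ I) :=
  le_antisymm (fun x hx ↦ mem_span_singleton_sup_colon_inf hb hx (h x hx))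
    (sup_le ((span_singleton_le_iff_mem I).mpr hb) inf_le_right)

end Ideal

theorem stmt_3_general {R : Type*} [CommRing R] (I J : Ideal R) (a b : R)
    (hb : b ∈ I)
    (h : ∀ x ∈ I, a * x ∈ J * I ⊔ Ideal.span {a * b}) :
    I = Ideal.span {b} ⊔ ((J * I).colon (Ideal.span {a}) ⊓ I) ∧
      I = Ideal.span {b} ⊔ (J.colon (Ideal.span {a}) ⊓ I) := by
  have hJ : ∀ x ∈ I, a * x ∈ J ⊔ Ideal.span {a * b} :=
    fun x hx ↦ sup_le_sup_right (Ideal.mul_le_left : J * I ≤ J) (Ideal.span {a * b}) (h x hx)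
  exact ⟨Ideal.eq_span_singleton_sup_colon_inf hb h, Ideal.eq_span_singleton_sup_colon_inf hb hJ⟩

theorem stmt_3 {R : Type*} [CommRing R] (I J : Ideal R) (a b : R)
    (ha : a ∈ I) (hb : b ∈ I)
    (h : ∀ x ∈ I, a * x ∈ J * I ⊔ Ideal.span {a * b}) :
    I = Ideal.span {b} ⊔ ((J * I).colon (Ideal.span {a}) ⊓ I) ∧
      I = Ideal.span {b} ⊔ (J.colon (Ideal.span {a}) ⊓ I) :=
  stmt_3_general I J a b hb h
end

section
/- Let R be a commutative ring and let y_1, ..., y_d ∈ R be elements such that y_d is a non zero divisor on R/(y_1,...,y_{d-1}). Set H = (y_1,...,y_d) and H' = (y_1,...,y_{d-1}). Then for any ideal I containing H one has H' ∩ H·I = H'·I. -/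
namespace Ideal

variable {R : Type*} [CommRing R]

theorem span_range_eq_span_range_castSucc_sup {d : ℕ} (y : Fin (d + 1) → R) :
    span (Set.range y) = span (Set.range fun i : Fin d => y i.castSucc) ⊔ span {y (Fin.last d)} := by
  conv_lhs => rw [← Fin.snoc_init_self y, Fin.range_snoc, span_insert, sup_comm]
  rfl

variable {J I : Ideal R} {a : R}

theorem inf_span_singleton_mul_le_mul (hreg : J.colon (span {a}) ≤ J) (ha : a ∈ I) :
    J ⊓ span {a} * I ≤ J * I := by
  rintro _ ⟨hxJ, hx⟩
  obtain ⟨c, -, rfl⟩ := mem_span_singleton_mul.mp hx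
  have hcJ : c ∈ J := hreg (mem_colon_span_singleton.mpr (mul_comm c a ▸ hxJ))
  exact mul_comm c a ▸ mul_mem_mul hcJ ha

theorem inf_sup_span_singleton_mul_eq_mul (hreg : J.colon (span {a}) ≤ J) (ha : a ∈ I) :
    J ⊓ (J ⊔ span {a}) * I = J * I := by
  -- modular law, as `J * I ≤ J`
  rw [sup_mul, inf_comm, sup_inf_assoc_of_le _ mul_le_left, sup_eq_left, inf_comm]
  exact inf_span_singleton_mul_le_mul hreg ha

end Ideal

theorem stmt_5 {R : Type*} [CommRing R] (d : ℕ) (y : Fin (d + 1) → R)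
    (H' : Ideal R) (hH' : H' = Ideal.span (Set.range fun i : Fin d => y i.castSucc))
    (H : Ideal R) (hH : H = Ideal.span (Set.range y))
    (hreg : H'.colon (Ideal.span {y (Fin.last d)}) = H')
    (I : Ideal R) (hHI : H ≤ I) :
    H' ⊓ (H * I) = H' * I := by
  have hsplit : H = H' ⊔ Ideal.span {y (Fin.last d)} := by
    rw [hH, hH', Ideal.span_range_eq_span_range_castSucc_sup]
  have hyd : y (Fin.last d) ∈ I := hHI (hH ▸ Ideal.subset_span ⟨Fin.last d, rfl⟩)
  rw [hsplit]
  exact Ideal.inf_sup_span_singleton_mul_eq_mul hreg.le hyd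
end

section
/- Let R be a commutative ring and let y_1, ..., y_d ∈ R with y_d a non zero divisor on R/(y_1,...,y_{d-1}). Let I be an ideal containing H = (y_1,...,y_d), set H' = (y_1,...,y_{d-1}), and assume H ∩ I^2 = H·I. Then (H' : I) ∩ I^2 = H' ∩ I^2 = H'·I. -/
theorem stmt_6 {R : Type*} [CommRing R] (d : ℕ) (y : Fin (d + 1) → R)
    (H' : Ideal R) (hH' : H' = Ideal.span (Set.range fun i : Fin d => y i.castSucc))
    (H : Ideal R) (hH : H = Ideal.span (Set.range y))
    (hreg : H'.colon (Ideal.span {y (Fin.last d)}) = H')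
    (I : Ideal R) (hHI : H ≤ I)
    (hVV : H ⊓ I ^ 2 = H * I) :
    H'.colon I ⊓ I ^ 2 = H' ⊓ I ^ 2 ∧ H' ⊓ I ^ 2 = H' * I := by
  have hyd_mem : y (Fin.last d) ∈ I := hHI (hH ▸ Ideal.subset_span ⟨Fin.last d, rfl⟩)
  have hH'H : H' ≤ H := by
    rw [hH', hH]
    exact Ideal.span_mono (by rintro _ ⟨i, rfl⟩; exact ⟨i.castSucc, rfl⟩)
  have hH'I : H' ≤ I := hH'H.trans hHI
  have hsplit : H = H' ⊔ Ideal.span {y (Fin.last d)} := by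
    rw [hH', hH, ← Ideal.span_union]
    congr 1
    ext x
    constructor
    · rintro ⟨i, rfl⟩
      induction i using Fin.lastCases with
      | last => exact Or.inr rfl
      | cast j => exact Or.inl ⟨j, rfl⟩
    · rintro (⟨j, rfl⟩ | h)
      · exact ⟨j.castSucc, rfl⟩
      · exact ⟨Fin.last d, h.symm⟩
  have hcolonI : H'.colon I = H' := by
    apply le_antisymm
    · intro x hx
      have hxy : x * y (Fin.last d) ∈ H' := by
        simpa [smul_eq_mul] using Submodule.mem_colon.mp hx (y (Fin.last d)) hyd_mem
      rw [← hreg]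
      exact Ideal.mem_colon_span_singleton.mpr hxy
    · intro x hx
      exact Submodule.mem_colon.mpr fun p hp => by
        simpa [smul_eq_mul] using Ideal.mul_mem_right p _ hx
  constructor
  · rw [hcolonI]
  · apply le_antisymm
    · intro x hx
      obtain ⟨hxH', hxI2⟩ := hx
      have hxHI : x ∈ H * I := hVV ▸ ⟨hH'H hxH', hxI2⟩
      rw [hsplit, Ideal.sup_mul] at hxHI
      obtain ⟨u, hu, v, hv, huv⟩ := Submodule.mem_sup.mp hxHI
      obtain ⟨b, hb, hby⟩ := Ideal.mem_span_singleton_mul.mp hv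
      have huH' : u ∈ H' := (Ideal.mul_le.mpr fun a ha c _ => Ideal.mul_mem_right c _ ha) hu
      have hvH' : v ∈ H' := by
        have : v = x - u := by rw [← huv]; ring
        rw [this]
        exact Submodule.sub_mem _ hxH' huH'
      have hbH' : b ∈ H' := by
        rw [← hreg]
        refine Ideal.mem_colon_span_singleton.mpr ?_
        rw [mul_comm, hby]
        exact hvH'
      have hvHI : v ∈ H' * I := by
        rw [← hby, mul_comm (y (Fin.last d)) b]
        exact Ideal.mul_mem_mul hbH' hyd_mem
      have huHI : u ∈ H' * I := hu
      rw [← huv]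
      exact Ideal.add_mem _ huHI hvHI
    · refine le_inf (Ideal.mul_le.mpr fun a ha c _ => Ideal.mul_mem_right c _ ha) ?_
      rw [pow_two]
      exact Ideal.mul_mono hH'I le_rfl
end

section
/- Let R be a commutative ring, I an ideal, and x_1, ..., x_{i+1} elements of I. Fix n ≥ 2 and assume: (x_1,...,x_{i+1}) ∩ I^n = (x_1,...,x_{i+1})·I^{n-1}, ((x_1,...,x_i) : x_{i+1}) ∩ I^{n-1} = (x_1,...,x_i) ∩ I^{n-1}, and (x_1,...,x_i) ∩ I^{n-1} = (x_1,...,x_i)·I^{n-2}. Then (x_1,...,x_i) ∩ I^n = (x_1,...,x_i)·I^{n-1}. -/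
namespace Ideal

variable {R : Type*} [CommRing R]

theorem mul_pow_le_inf_pow_succ {A I : Ideal R} (hAI : A ≤ I) (m : ℕ) :
    A * I ^ m ≤ A ⊓ I ^ (m + 1) :=
  le_inf mul_le_left (pow_succ' I m ▸ mul_mono_left hAI)

theorem inf_pow_le_mul_pow_of_colon_inf_le {A I : Ideal R} {y : R} (hy : y ∈ I) {m : ℕ}
    (hB : (A ⊔ span {y}) ⊓ I ^ (m + 2) ≤ (A ⊔ span {y}) * I ^ (m + 1))
    (hcolon : A.colon (span {y}) ⊓ I ^ (m + 1) ≤ A * I ^ m) :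
    A ⊓ I ^ (m + 2) ≤ A * I ^ (m + 1) := by
  rintro a ⟨haA, haI⟩
  have haB : a ∈ A * I ^ (m + 1) ⊔ span {y} * I ^ (m + 1) := by
    rw [← sup_mul]
    exact hB ⟨mem_sup_left haA, haI⟩
  obtain ⟨p, hp, _, hq, rfl⟩ := Submodule.mem_sup.mp haB
  obtain ⟨z, hz, rfl⟩ := mem_span_singleton_mul.mp hq
  have hyz : y * z ∈ A := by
    have := A.sub_mem haA (mul_le_left hp)
    rwa [add_sub_cancel_left] at this
  have hzA : z ∈ A * I ^ m :=
    hcolon ⟨mem_colon_span_singleton.mpr (mul_comm z y ▸ hyz), hz⟩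
  have hyzI : y * z ∈ A * I ^ (m + 1) := by
    rw [pow_succ', mul_left_comm]
    exact mul_mem_mul hy hzA
  exact add_mem hp hyzI

end Ideal

theorem stmt_12 {R : Type*} [CommRing R] (I : Ideal R) (i : ℕ)
    (x : Fin (i + 1) → R) (hx : ∀ j, x j ∈ I)
    (A : Ideal R) (hA : A = Ideal.span (Set.range fun j : Fin i => x j.castSucc))
    (B : Ideal R) (hB : B = A ⊔ Ideal.span {x (Fin.last i)})
    (n : ℕ) (hn : 2 ≤ n)
    (h1 : B ⊓ I ^ n = B * I ^ (n - 1))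
    (h2 : A.colon (Ideal.span {x (Fin.last i)}) ⊓ I ^ (n - 1) = A ⊓ I ^ (n - 1))
    (h3 : A ⊓ I ^ (n - 1) = A * I ^ (n - 2)) :
    A ⊓ I ^ n = A * I ^ (n - 1) := by
  obtain ⟨m, rfl⟩ : ∃ m, n = m + 2 := ⟨n - 2, by omega⟩
  simp only [Nat.add_sub_cancel, Nat.add_sub_assoc one_le_two] at h1 h2 h3 ⊢
  have hAI : A ≤ I := by
    rw [hA, Ideal.span_le]
    rintro _ ⟨j, rfl⟩
    exact hx _
  subst hB
  refine le_antisymm ?_ (Ideal.mul_pow_le_inf_pow_succ hAI _)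
  exact Ideal.inf_pow_le_mul_pow_of_colon_inf_le (hx _) h1.le (h2.trans h3).le
end
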